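/- arXiv:math/0110317 — 2 statements merged into one kernel-verified Lean document; each statement's English description precedes it below -/
import Mathlib

section
/- Let 𝒯 be an additive subgroup of ℝ, 𝒰 a set of inputs, μ an input measure, and C ≥ 0. If a set S of trajectories is (μ,C)-𝒦𝓛-practical-IOS, then S is (μ,C)-practical-IOS. -/
open Set Filter

/-- A function of class 𝒦: continuous, strictly increasing on `[0,∞)`, zero at zero,
and nonnegative on `[0,∞)`. -/
def ClassK (γ : ℝ → ℝ) : Prop :=
  ContinuousOn γ (Ici 0) ∧ StrictMonoOn γ (Ici 0) ∧ γ 0 = 0 ∧ ∀ s, 0 ≤ s → 0 ≤ γ s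

/-- A function of class 𝒦∞: class 𝒦 and unbounded. -/
def ClassKInf (γ : ℝ → ℝ) : Prop :=
  ClassK γ ∧ Tendsto γ atTop atTop

/-- A function of class 𝒦𝓛. -/
def ClassKL (β : ℝ → ℝ → ℝ) : Prop :=
  (∀ t, 0 ≤ t → ClassK (fun s => β s t)) ∧
  (∀ s, 0 ≤ s → ContinuousOn (β s) (Ici 0) ∧ AntitoneOn (β s) (Ici 0) ∧
    Tendsto (β s) atTop (nhds 0))

/-- An input measure on the set of inputs `U`: nonnegative, and monotone as a set
function on finite subintervals of `[0,∞)`. -/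
def InputMeasure {U : Type*} (μ : U → ℝ → ℝ → ℝ) : Prop :=
  (∀ u a b, 0 ≤ a → 0 ≤ b → 0 ≤ μ u a b) ∧
  (∀ u a b c d, 0 ≤ a → a ≤ b → b ≤ c → c ≤ d → μ u b c ≤ μ u a d)

/-- `(τ, u, x, y)` is a trajectory: `0 < τ ≤ ∞` and `x`, `y` map `[0,τ)`
(intersected with the time set `𝒯`) into `[0,∞)`. -/
def IsTraj (𝒯 : AddSubgroup ℝ) (τ : EReal) (x y : ℝ → ℝ) : Prop :=
  0 < τ ∧
  (∀ t : ℝ, t ∈ 𝒯 → 0 ≤ t → (t : EReal) < τ → 0 ≤ x t ∧ 0 ≤ y t)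

/-- A set `S` of trajectories is `(μ,C)`-𝒦𝓛-practical-IOS:  there is `β` of class 𝒦𝓛
such that `y(t) ≤ max {β(x(t₀), t−t₀), μ(u,t₀,t), C}` along every trajectory in `S`. -/
def KLPracticalIOS (𝒯 : AddSubgroup ℝ) {U : Type*} (μ : U → ℝ → ℝ → ℝ) (C : ℝ)
    (S : Set (EReal × U × (ℝ → ℝ) × (ℝ → ℝ))) : Prop :=
  ∃ β : ℝ → ℝ → ℝ, ClassKL β ∧
    ∀ τ u x y, (τ, u, x, y) ∈ S →
      ∀ t0 t : ℝ, t0 ∈ 𝒯 → t ∈ 𝒯 → 0 ≤ t0 → t0 ≤ t → (t : EReal) < τ →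
        y t ≤ max (β (x t0) (t - t0)) (max (μ u t0 t) C)

/-- A set `S` of trajectories is `(μ,C)`-practical-IOS: (1) `(μ,C)`-uniform practical
stability, and (2) `(μ,C)`-uniform practical attractivity. -/
def PracticalIOS (𝒯 : AddSubgroup ℝ) {U : Type*} (μ : U → ℝ → ℝ → ℝ) (C : ℝ)
    (S : Set (EReal × U × (ℝ → ℝ) × (ℝ → ℝ))) : Prop :=
  (∃ δ : ℝ → ℝ, ClassKInf δ ∧
    ∀ ε : ℝ, 0 < ε → ∀ τ u x y, (τ, u, x, y) ∈ S →
      ∀ t0 : ℝ, t0 ∈ 𝒯 → 0 ≤ t0 → (t0 : EReal) < τ → x t0 ≤ δ ε →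
        ∀ t : ℝ, t ∈ 𝒯 → t0 ≤ t → (t : EReal) < τ →
          y t ≤ max ε (max (μ u t0 t) C)) ∧
  (∀ r : ℝ, 0 < r → ∀ ε : ℝ, C < ε → ∃ T : ℝ, 0 < T ∧
    ∀ τ u x y, (τ, u, x, y) ∈ S →
      ∀ t0 : ℝ, t0 ∈ 𝒯 → 0 ≤ t0 → (t0 : EReal) < τ → x t0 ≤ r →
        ∀ t : ℝ, t ∈ 𝒯 → t0 + T ≤ t → (t : EReal) < τ →
          y t ≤ max ε (μ u t0 t))

/-- Proposition 2.6 (i): `(μ,C)`-𝒦𝓛-practical-IOS implies `(μ,C)`-practical-IOS. -/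
theorem klPracticalIOS_implies_practicalIOS {U : Type*} (𝒯 : AddSubgroup ℝ)
    (μ : U → ℝ → ℝ → ℝ) (hμ : InputMeasure μ) (C : ℝ) (hC : 0 ≤ C)
    (S : Set (EReal × U × (ℝ → ℝ) × (ℝ → ℝ)))
    (hS : ∀ τ u x y, (τ, u, x, y) ∈ S → IsTraj 𝒯 τ x y)
    (h : KLPracticalIOS 𝒯 μ C S) :
    PracticalIOS 𝒯 μ C S := by
  obtain ⟨β, ⟨hβK, hβL⟩, hβ⟩ := h
  obtain ⟨hβc, hβm, hβ0, hβnn⟩ := hβK 0 le_rfl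
  -- the auxiliary K∞ function α s = β (max s 0) 0 + s
  set α : ℝ → ℝ := fun s => β (max s 0) 0 + s with hα
  have hαmono : StrictMono α := by
    have hmono : Monotone fun s => β (max s 0) 0 := by
      intro a b hab
      rcases eq_or_lt_of_le (max_le_max_right (0:ℝ) hab) with h' | h'
      · simp [h']
      · exact le_of_lt (hβm (Set.mem_Ici.mpr (le_max_right _ _)) (Set.mem_Ici.mpr (le_max_right _ _)) h')
    exact hmono.add_strictMono strictMono_id
  have hαcont : Continuous α := by
    have h1 : Continuous fun s : ℝ => β (max s 0) 0 :=
      hβc.comp_continuous (continuous_id.max continuous_const)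
        (fun x => Set.mem_Ici.mpr (le_max_right _ _))
    exact h1.add continuous_id
  have hα0 : α 0 = 0 := by simp [hα, hβ0]
  have hαsurj : Function.Surjective α := by
    refine hαcont.surjective ?_ ?_
    · refine tendsto_atTop_mono (fun s => ?_) tendsto_id
      have := hβnn (max s 0) (le_max_right _ _)
      simp only [hα, id]; linarith
    · refine Tendsto.congr' ?_ tendsto_id
      filter_upwards [eventually_le_atBot (0:ℝ)] with s hs
      simp [hα, max_eq_right hs, hβ0]
  set e : ℝ ≃o ℝ := StrictMono.orderIsoOfSurjective α hαmono hαsurj with he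
  set δ : ℝ → ℝ := fun s => e.symm s with hδ
  have hδ0 : δ 0 = 0 := by
    show e.symm 0 = 0
    rw [e.symm_apply_eq]
    exact hα0.symm
  have hδmono : StrictMono δ := e.symm.strictMono
  have hδnn : ∀ s, 0 ≤ s → 0 ≤ δ s := by
    intro s hs
    rw [← hδ0]; exact hδmono.monotone hs
  have hkey : ∀ ε : ℝ, 0 < ε → ∀ s, 0 ≤ s → s ≤ δ ε → ∀ t, 0 ≤ t → β s t ≤ ε := by
    intro ε hε s hs hsδ t ht
    have hδε : 0 ≤ δ ε := hδnn ε hε.le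
    have h1 : β s t ≤ β s 0 := (hβL s hs).2.1 self_mem_Ici ht ht
    have h2 : β s 0 ≤ β (δ ε) 0 := by
      rcases eq_or_lt_of_le hsδ with h' | h'
      · simp [h']
      · exact le_of_lt (hβm hs hδε h')
    have h3 : β (δ ε) 0 ≤ ε := by
      have : α (δ ε) = ε := e.apply_symm_apply ε
      have h4 : β (max (δ ε) 0) 0 + δ ε = ε := this
      rw [max_eq_left hδε] at h4
      linarith
    linarith
  constructor
  · -- stability
    refine ⟨δ, ⟨⟨e.symm.continuous.continuousOn, hδmono.strictMonoOn _, hδ0, hδnn⟩, ?_⟩, ?_⟩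
    · refine tendsto_atTop_atTop.mpr fun b => ⟨e b, fun a hab => ?_⟩
      calc b = e.symm (e b) := (e.symm_apply_apply b).symm
        _ ≤ e.symm a := e.symm.monotone hab
    · intro ε hε τ u x y hmem t0 ht0𝒯 ht0 ht0τ hxδ t ht𝒯 htt0 htτ
      have hx0 : 0 ≤ x t0 := ((hS τ u x y hmem).2 t0 ht0𝒯 ht0 (lt_of_le_of_lt (by exact_mod_cast le_refl _) ht0τ)).1
      have hb := hβ τ u x y hmem t0 t ht0𝒯 ht𝒯 ht0 htt0 htτ
      have hβle : β (x t0) (t - t0) ≤ ε :=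
        hkey ε hε (x t0) hx0 hxδ (t - t0) (by linarith)
      calc y t ≤ max (β (x t0) (t - t0)) (max (μ u t0 t) C) := hb
        _ ≤ max ε (max (μ u t0 t) C) := max_le_max_right _ hβle
  · -- attractivity
    intro r hr ε hε
    have hεpos : 0 < ε := lt_of_le_of_lt hC hε
    have htend := (hβL r hr.le).2.2
    obtain ⟨T', hT'⟩ := eventually_atTop.mp (htend.eventually_lt_const hεpos)
    refine ⟨max T' 1, lt_of_lt_of_le one_pos (le_max_right _ _), ?_⟩
    intro τ u x y hmem t0 ht0𝒯 ht0 ht0τ hxr t ht𝒯 htt0 htτ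
    have hx0 : 0 ≤ x t0 := ((hS τ u x y hmem).2 t0 ht0𝒯 ht0 (lt_of_le_of_lt (by exact_mod_cast le_refl _) ht0τ)).1
    have hT1 : (0:ℝ) < max T' 1 := lt_of_lt_of_le one_pos (le_max_right _ _)
    have htt0' : t0 ≤ t := by linarith
    have hb := hβ τ u x y hmem t0 t ht0𝒯 ht𝒯 ht0 htt0' htτ
    have hst : 0 ≤ t - t0 := by linarith
    have h1 : β (x t0) (t - t0) ≤ β r (t - t0) := by
      rcases eq_or_lt_of_le hxr with h' | h'
      · simp [h']
      · exact le_of_lt ((hβK (t - t0) hst).2.1 hx0 hr.le h')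
    have h2 : β r (t - t0) < ε := hT' (t - t0) (by
      have : T' ≤ max T' 1 := le_max_left _ _
      linarith)
    have h3 : β (x t0) (t - t0) ≤ ε := by linarith
    calc y t ≤ max (β (x t0) (t - t0)) (max (μ u t0 t) C) := hb
      _ ≤ max ε (μ u t0 t) := by
          apply max_le (le_trans h3 (le_max_left _ _))
          exact max_le (le_max_right _ _) (le_trans hε.le (le_max_left _ _))
end

section
/- Let 𝒯 be an additive subgroup of ℝ, 𝒰 a set of inputs, μ an input measure, and C ≥ 0. If a set S of trajectories is (μ,C)-practical-IOS, then S is (μ,3C)-𝒦𝓛-practical-IOS. -/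
open Set Filter

noncomputable section IOSAux

namespace IOSAux

/-- clamp to `[0,1]` -/
def c01 (x : ℝ) : ℝ := max 0 (min 1 x)

lemma c01_nonneg (x : ℝ) : 0 ≤ c01 x := le_max_left _ _
lemma c01_le_one (x : ℝ) : c01 x ≤ 1 := max_le zero_le_one (min_le_left _ _)
lemma c01_mono : Monotone c01 := fun _ _ hab =>
  max_le_max le_rfl (min_le_min le_rfl hab)
lemma c01_continuous : Continuous c01 :=
  continuous_const.max (continuous_const.min continuous_id)
lemma c01_eq_one {x : ℝ} (hx : 1 ≤ x) : c01 x = 1 := by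
  simp [c01, min_eq_left hx]
lemma c01_eq_zero {x : ℝ} (hx : x ≤ 0) : c01 x = 0 := by
  have h1 : min 1 x ≤ 0 := le_trans (min_le_right _ _) hx
  simp [c01, max_eq_left h1]

/-- real powers of two -/
def pow2 (s : ℝ) : ℝ := Real.exp (s * Real.log 2)

lemma pow2_pos (s : ℝ) : 0 < pow2 s := Real.exp_pos _
lemma pow2_mono : Monotone pow2 := fun a b hab =>
  Real.exp_le_exp.2 (mul_le_mul_of_nonneg_right hab (Real.log_nonneg one_le_two))
lemma pow2_continuous : Continuous pow2 :=
  Real.continuous_exp.comp (continuous_id.mul continuous_const)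
lemma pow2_natCast (n : ℕ) : pow2 n = 2 ^ n := by
  rw [pow2, Real.exp_nat_mul, Real.exp_log two_pos]
lemma pow2_nat_mul_inv_pow (n : ℕ) : pow2 ((n : ℝ) + 1) * (2⁻¹ : ℝ) ^ n = 2 := by
  have h : ((n : ℝ) + 1) = ((n + 1 : ℕ) : ℝ) := by push_cast; ring
  rw [h, pow2_natCast, inv_pow, pow_succ, mul_comm ((2:ℝ)^n) 2, mul_assoc,
    mul_inv_cancel₀ (pow_ne_zero n two_ne_zero), mul_one]

lemma summable_geom_half : Summable (fun n : ℕ => (2⁻¹ : ℝ) ^ n) :=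
  summable_geometric_of_lt_one (by norm_num) (by norm_num)

lemma summable_of_le_geom {f : ℕ → ℝ} (h0 : ∀ n, 0 ≤ f n)
    (h1 : ∀ n, f n ≤ (2⁻¹ : ℝ) ^ n) : Summable f :=
  Summable.of_nonneg_of_le h0 h1 summable_geom_half

lemma hasSum_geo_tail (M : ℕ) :
    HasSum (fun n : ℕ => if n < M then (0 : ℝ) else (2⁻¹ : ℝ) ^ n)
      (2 * (2⁻¹ : ℝ) ^ M) := by
  have h1 : HasSum (fun i : ℕ => (2⁻¹ : ℝ) ^ (M + i)) (2 * (2⁻¹ : ℝ) ^ M) := by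
    have h := (hasSum_geometric_of_lt_one (by norm_num : (0:ℝ) ≤ 2⁻¹)
      (by norm_num : (2⁻¹:ℝ) < 1)).mul_left ((2⁻¹ : ℝ) ^ M)
    have h2 : ((2⁻¹:ℝ) ^ M) * ((1:ℝ) - 2⁻¹)⁻¹ = 2 * (2⁻¹:ℝ) ^ M := by
      norm_num [mul_comm]
    rw [h2] at h
    simpa [pow_add] using h
  have inj : Function.Injective (fun i : ℕ => M + i) := by
    intro a b hab
    have h : M + a = M + b := hab
    omega
  refine (Function.Injective.hasSum_iff inj ?_).1 ?_
  · intro x hx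
    have hxM : x < M := by
      by_contra hc
      exact hx ⟨x - M, show M + (x - M) = x by omega⟩
    simp [hxM]
  · have he : ((fun n : ℕ => if n < M then (0:ℝ) else (2⁻¹:ℝ) ^ n) ∘ (fun i : ℕ => M + i))
        = fun i : ℕ => (2⁻¹:ℝ) ^ (M + i) := by
      funext i
      simp only [Function.comp_apply]
      rw [if_neg (by omega)]
    rw [he]
    exact h1

lemma tsum_tail_le (M : ℕ) (f : ℕ → ℝ) (h0 : ∀ n, 0 ≤ f n)
    (hle : ∀ n, f n ≤ (2⁻¹:ℝ) ^ n) (hz : ∀ n, n < M → f n = 0) :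
    ∑' n, f n ≤ 2 * (2⁻¹:ℝ) ^ M := by
  have hg := hasSum_geo_tail M
  have h1 : ∑' n, f n ≤ ∑' n, (if n < M then (0:ℝ) else (2⁻¹:ℝ)^n) := by
    refine Summable.tsum_le_tsum (fun n => ?_) (summable_of_le_geom h0 hle) hg.summable
    by_cases hn : n < M
    · simp [hn, hz n hn]
    · simpa [hn] using hle n
  calc ∑' n, f n ≤ _ := h1
    _ = 2 * (2⁻¹:ℝ) ^ M := hg.tsum_eq

lemma tsum_tail_ge (m : ℕ) (f : ℕ → ℝ) (h0 : ∀ n, 0 ≤ f n)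
    (hle : ∀ n, f n ≤ (2⁻¹:ℝ) ^ n)
    (hge : ∀ n, m ≤ n → (2⁻¹:ℝ) ^ (n+1) ≤ f n) :
    (2⁻¹:ℝ) ^ m ≤ ∑' n, f n := by
  have hg : HasSum (fun n : ℕ => if n < m then (0:ℝ) else (2⁻¹:ℝ) ^ (n+1))
      ((2⁻¹:ℝ) ^ m) := by
    have h := (hasSum_geo_tail m).mul_left (2⁻¹:ℝ)
    have h2 : (2⁻¹:ℝ) * (2 * (2⁻¹:ℝ)^m) = (2⁻¹:ℝ)^m := by ring
    rw [h2] at h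
    convert h using 1
    · rfl
    funext n
    by_cases hn : n < m
    · simp [hn]
    · simp only [hn, if_neg, if_false]
      rw [pow_succ]
      ring
  have h1 : ∑' n, (if n < m then (0:ℝ) else (2⁻¹:ℝ)^(n+1)) ≤ ∑' n, f n := by
    refine Summable.tsum_le_tsum (fun n => ?_) hg.summable (summable_of_le_geom h0 hle)
    by_cases hn : n < m
    · simpa [hn] using h0 n
    · simpa [hn] using hge n (Nat.le_of_not_lt hn)
  calc (2⁻¹:ℝ) ^ m = _ := hg.tsum_eq.symm
    _ ≤ ∑' n, f n := h1

end IOSAux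
namespace IOSAux

variable (T : ℕ → ℕ → ℝ)

/-- weighted count of indices `n` with `t ≲ T n j` -/
def W (j : ℕ) (t : ℝ) : ℝ := ∑' n : ℕ, (2⁻¹:ℝ) ^ n * c01 (T n j + 1 - t)

lemma Wterm_nonneg (j : ℕ) (t : ℝ) (n : ℕ) :
    0 ≤ (2⁻¹:ℝ) ^ n * c01 (T n j + 1 - t) :=
  mul_nonneg (pow_nonneg (by norm_num) n) (c01_nonneg _)

lemma Wterm_le (j : ℕ) (t : ℝ) (n : ℕ) :
    (2⁻¹:ℝ) ^ n * c01 (T n j + 1 - t) ≤ (2⁻¹:ℝ) ^ n :=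
  mul_le_of_le_one_right (pow_nonneg (by norm_num) n) (c01_le_one _)

lemma summable_W (j : ℕ) (t : ℝ) :
    Summable (fun n : ℕ => (2⁻¹:ℝ) ^ n * c01 (T n j + 1 - t)) :=
  summable_of_le_geom (Wterm_nonneg T j t) (Wterm_le T j t)

lemma W_nonneg (j : ℕ) (t : ℝ) : 0 ≤ W T j t :=
  tsum_nonneg (Wterm_nonneg T j t)

lemma W_anti (j : ℕ) : Antitone (W T j) := by
  intro t1 t2 h12
  refine Summable.tsum_le_tsum (fun n => ?_) (summable_W T j t2) (summable_W T j t1)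
  exact mul_le_mul_of_nonneg_left (c01_mono (by linarith)) (pow_nonneg (by norm_num) n)

lemma W_mono_j (hT : ∀ ⦃n n' : ℕ⦄, n ≤ n' → ∀ ⦃j j' : ℕ⦄, j ≤ j' → T n j ≤ T n' j')
    {j j' : ℕ} (hj : j ≤ j') (t : ℝ) : W T j t ≤ W T j' t := by
  refine Summable.tsum_le_tsum (fun n => ?_) (summable_W T j t) (summable_W T j' t)
  exact mul_le_mul_of_nonneg_left (c01_mono (by linarith [hT (le_refl n) hj]))
    (pow_nonneg (by norm_num) n)

lemma W_continuous (j : ℕ) : Continuous (W T j) := by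
  refine continuous_tsum (F := ℝ)
    (f := fun n t => (2⁻¹:ℝ) ^ n * c01 (T n j + 1 - t))
    (u := fun n => (2⁻¹:ℝ) ^ n) (fun n => ?_) summable_geom_half (fun n t => ?_)
  · exact continuous_const.mul (c01_continuous.comp (continuous_const.sub continuous_id))
  · rw [Real.norm_eq_abs, abs_of_nonneg (Wterm_nonneg T j t n)]
    exact Wterm_le T j t n

lemma W_ge {j n : ℕ} {t : ℝ} (h : t ≤ T n j) : (2⁻¹:ℝ) ^ n ≤ W T j t := by
  have h1 := Summable.le_tsum (summable_W T j t) n (fun m _ => Wterm_nonneg T j t m)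
  rwa [c01_eq_one (by linarith), mul_one] at h1

lemma W_le_tail (hT : ∀ ⦃n n' : ℕ⦄, n ≤ n' → ∀ ⦃j j' : ℕ⦄, j ≤ j' → T n j ≤ T n' j')
    {j N : ℕ} {t : ℝ} (h : T N j + 1 ≤ t) : W T j t ≤ (2⁻¹:ℝ) ^ N := by
  have h1 := tsum_tail_le (N+1) (fun n => (2⁻¹:ℝ) ^ n * c01 (T n j + 1 - t))
    (Wterm_nonneg T j t) (Wterm_le T j t) (fun n hn => by
      show (2⁻¹:ℝ) ^ n * c01 (T n j + 1 - t) = 0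
      rw [c01_eq_zero (by linarith [hT (show n ≤ N by omega) (le_refl j)]), mul_zero])
  have h2 : 2 * (2⁻¹:ℝ) ^ (N+1) = (2⁻¹:ℝ) ^ N := by rw [pow_succ]; ring
  rw [h2] at h1
  exact h1

/-- soft indicator that the pair `(s, t)` is "before" the `j`-th deadline -/
def th (j : ℕ) (s t : ℝ) : ℝ := c01 (pow2 (s + 1) * W T j t - 1)

lemma th_nonneg (j : ℕ) (s t : ℝ) : 0 ≤ th T j s t := c01_nonneg _
lemma th_le_one (j : ℕ) (s t : ℝ) : th T j s t ≤ 1 := c01_le_one _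

lemma th_mono_s (j : ℕ) (t : ℝ) : Monotone (fun s => th T j s t) := fun a b hab =>
  c01_mono (sub_le_sub_right
    (mul_le_mul_of_nonneg_right (pow2_mono (by linarith)) (W_nonneg T j t)) 1)

lemma th_anti_t (j : ℕ) (s : ℝ) : Antitone (th T j s) := fun t1 t2 h12 =>
  c01_mono (sub_le_sub_right
    (mul_le_mul_of_nonneg_left (W_anti T j h12) (pow2_pos _).le) 1)

lemma th_mono_j (hT : ∀ ⦃n n' : ℕ⦄, n ≤ n' → ∀ ⦃j j' : ℕ⦄, j ≤ j' → T n j ≤ T n' j')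
    {j j' : ℕ} (hj : j ≤ j') (s t : ℝ) : th T j s t ≤ th T j' s t :=
  c01_mono (sub_le_sub_right
    (mul_le_mul_of_nonneg_left (W_mono_j T hT hj t) (pow2_pos _).le) 1)

lemma th_continuous_s (j : ℕ) (t : ℝ) : Continuous (fun s => th T j s t) :=
  c01_continuous.comp
    (((pow2_continuous.comp (continuous_id.add continuous_const)).mul
      continuous_const).sub continuous_const)

lemma th_continuous_t (j : ℕ) (s : ℝ) : Continuous (th T j s) :=
  c01_continuous.comp
    ((continuous_const.mul (W_continuous T j)).sub continuous_const)

lemma th_eq_one {j n : ℕ} {s t : ℝ} (hn : (n : ℝ) ≤ s) (ht : t ≤ T n j) :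
    th T j s t = 1 := by
  apply c01_eq_one
  have h1 : (2⁻¹:ℝ) ^ n ≤ W T j t := W_ge T ht
  have h2 : pow2 ((n:ℝ) + 1) ≤ pow2 (s + 1) := pow2_mono (by linarith)
  have h3 : (2:ℝ) ≤ pow2 (s + 1) * W T j t := by
    calc (2:ℝ) = pow2 ((n:ℝ) + 1) * (2⁻¹:ℝ) ^ n := (pow2_nat_mul_inv_pow n).symm
    _ ≤ pow2 (s + 1) * W T j t :=
      mul_le_mul h2 h1 (pow_nonneg (by norm_num) n) (pow2_pos _).le
  linarith

lemma th_eq_zero (hT : ∀ ⦃n n' : ℕ⦄, n ≤ n' → ∀ ⦃j j' : ℕ⦄, j ≤ j' → T n j ≤ T n' j')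
    {j N : ℕ} {s t : ℝ} (hN : pow2 (s + 1) * (2⁻¹:ℝ) ^ N ≤ 1) (ht : T N j + 1 ≤ t) :
    th T j s t = 0 := by
  apply c01_eq_zero
  have h1 : W T j t ≤ (2⁻¹:ℝ) ^ N := W_le_tail T hT ht
  have h2 : pow2 (s + 1) * W T j t ≤ pow2 (s + 1) * (2⁻¹:ℝ) ^ N :=
    mul_le_mul_of_nonneg_left h1 (pow2_pos _).le
  linarith

/-- the "tail level" function -/
def uu (s t : ℝ) : ℝ := 3 * ∑' j : ℕ, (2⁻¹:ℝ) ^ (j + 1) * th T (j + 1) s t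

lemma uuterm_nonneg (s t : ℝ) (j : ℕ) : 0 ≤ (2⁻¹:ℝ) ^ (j + 1) * th T (j + 1) s t :=
  mul_nonneg (pow_nonneg (by norm_num) _) (th_nonneg T _ s t)

lemma uuterm_le (s t : ℝ) (j : ℕ) :
    (2⁻¹:ℝ) ^ (j + 1) * th T (j + 1) s t ≤ (2⁻¹:ℝ) ^ j := by
  calc (2⁻¹:ℝ) ^ (j + 1) * th T (j + 1) s t ≤ (2⁻¹:ℝ) ^ (j + 1) :=
        mul_le_of_le_one_right (pow_nonneg (by norm_num) _) (th_le_one T _ s t)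
    _ ≤ (2⁻¹:ℝ) ^ j :=
        pow_le_pow_of_le_one (by norm_num) (by norm_num) (Nat.le_succ j)

lemma summable_uu (s t : ℝ) :
    Summable (fun j : ℕ => (2⁻¹:ℝ) ^ (j + 1) * th T (j + 1) s t) :=
  summable_of_le_geom (uuterm_nonneg T s t) (uuterm_le T s t)

lemma uu_nonneg (s t : ℝ) : 0 ≤ uu T s t :=
  mul_nonneg (by norm_num) (tsum_nonneg (uuterm_nonneg T s t))

lemma uu_mono_s (t : ℝ) : Monotone (fun s => uu T s t) := by
  intro a b hab
  refine mul_le_mul_of_nonneg_left ?_ (by norm_num)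
  refine Summable.tsum_le_tsum (fun j => ?_) (summable_uu T a t) (summable_uu T b t)
  exact mul_le_mul_of_nonneg_left (th_mono_s T (j+1) t hab) (pow_nonneg (by norm_num) _)

lemma uu_anti_t (s : ℝ) : Antitone (uu T s) := by
  intro t1 t2 h12
  refine mul_le_mul_of_nonneg_left ?_ (by norm_num)
  refine Summable.tsum_le_tsum (fun j => ?_) (summable_uu T s t2) (summable_uu T s t1)
  exact mul_le_mul_of_nonneg_left (th_anti_t T (j+1) s h12) (pow_nonneg (by norm_num) _)

lemma uu_continuous_s (t : ℝ) : Continuous (fun s => uu T s t) := by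
  refine continuous_const.mul ?_
  refine continuous_tsum (F := ℝ)
    (f := fun j s => (2⁻¹:ℝ) ^ (j + 1) * th T (j + 1) s t)
    (u := fun j => (2⁻¹:ℝ) ^ j) (fun j => ?_) summable_geom_half (fun j s => ?_)
  · exact continuous_const.mul (th_continuous_s T (j+1) t)
  · rw [Real.norm_eq_abs, abs_of_nonneg (uuterm_nonneg T s t j)]
    exact uuterm_le T s t j

lemma uu_continuous_t (s : ℝ) : Continuous (uu T s) := by
  refine continuous_const.mul ?_
  refine continuous_tsum (F := ℝ)
    (f := fun j t => (2⁻¹:ℝ) ^ (j + 1) * th T (j + 1) s t)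
    (u := fun j => (2⁻¹:ℝ) ^ j) (fun j => ?_) summable_geom_half (fun j t => ?_)
  · exact continuous_const.mul (th_continuous_t T (j+1) s)
  · rw [Real.norm_eq_abs, abs_of_nonneg (uuterm_nonneg T s t j)]
    exact uuterm_le T s t j

lemma uu_ge (hT : ∀ ⦃n n' : ℕ⦄, n ≤ n' → ∀ ⦃j j' : ℕ⦄, j ≤ j' → T n j ≤ T n' j')
    {s t : ℝ} {m : ℕ} (hs : 0 ≤ s) (ht : t ≤ T ⌊s⌋₊ (m + 1)) :
    3 * (2⁻¹:ℝ) ^ m ≤ uu T s t := by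
  have key : (2⁻¹:ℝ) ^ m ≤ ∑' j : ℕ, (2⁻¹:ℝ) ^ (j + 1) * th T (j + 1) s t := by
    refine tsum_tail_ge m _ (uuterm_nonneg T s t) (uuterm_le T s t) (fun j hj => ?_)
    rw [th_eq_one T (Nat.floor_le hs) (le_trans ht (hT (le_refl _) (by omega))), mul_one]
  calc 3 * (2⁻¹:ℝ) ^ m ≤ 3 * ∑' j : ℕ, (2⁻¹:ℝ) ^ (j + 1) * th T (j + 1) s t :=
        mul_le_mul_of_nonneg_left key (by norm_num)
    _ = uu T s t := rfl

lemma uu_le (hT : ∀ ⦃n n' : ℕ⦄, n ≤ n' → ∀ ⦃j j' : ℕ⦄, j ≤ j' → T n j ≤ T n' j')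
    {s t : ℝ} {M N : ℕ} (hN : pow2 (s + 1) * (2⁻¹:ℝ) ^ N ≤ 1) (ht : T N M + 1 ≤ t) :
    uu T s t ≤ 6 * (2⁻¹:ℝ) ^ M := by
  have hM0 : th T M s t = 0 := th_eq_zero T hT hN ht
  have hz : ∀ j, j < M → (2⁻¹:ℝ) ^ (j + 1) * th T (j + 1) s t = 0 := by
    intro j hj
    have h1 : th T (j+1) s t ≤ 0 := hM0 ▸ th_mono_j T hT (by omega) s t
    have h2 := th_nonneg T (j+1) s t
    rw [le_antisymm h1 h2, mul_zero]
  have h1 := tsum_tail_le M _ (uuterm_nonneg T s t) (uuterm_le T s t) hz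
  calc uu T s t ≤ 3 * (2 * (2⁻¹:ℝ) ^ M) := mul_le_mul_of_nonneg_left h1 (by norm_num)
    _ = 6 * (2⁻¹:ℝ) ^ M := by ring

lemma exists_N (s : ℝ) : ∃ N : ℕ, pow2 (s + 1) * (2⁻¹:ℝ) ^ N ≤ 1 := by
  obtain ⟨N, hN⟩ := exists_pow_lt_of_lt_one (inv_pos.2 (pow2_pos (s + 1)))
    (by norm_num : (2⁻¹:ℝ) < 1)
  refine ⟨N, ?_⟩
  have h := mul_lt_mul_of_pos_left hN (pow2_pos (s + 1))
  rw [mul_inv_cancel₀ (pow2_pos _).ne'] at h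
  exact h.le

end IOSAux
namespace IOSAux

lemma exists_beta (φ : ℝ → ℝ) (hφc : ContinuousOn φ (Ici 0))
    (hφm : StrictMonoOn φ (Ici 0)) (hφ0 : φ 0 = 0) (hφnn : ∀ s, 0 ≤ s → 0 ≤ φ s)
    (T : ℕ → ℕ → ℝ)
    (hT : ∀ ⦃n n' : ℕ⦄, n ≤ n' → ∀ ⦃j j' : ℕ⦄, j ≤ j' → T n j ≤ T n' j') :
    ∃ β : ℝ → ℝ → ℝ, ClassKL β ∧ ∀ s t : ℝ, 0 ≤ s →
      (t ≤ T ⌊s⌋₊ 0 → φ s ≤ β s t) ∧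
      (∀ m : ℕ, t ≤ T ⌊s⌋₊ (m + 1) → min (φ s) (3 * (2⁻¹:ℝ) ^ m) ≤ β s t) := by
  refine ⟨fun s t => φ s * Real.exp (-t) + φ s * th T 0 s t + min (φ s) (uu T s t),
    ⟨?_, ?_⟩, ?_⟩
  · -- for each t ≥ 0, Class K in s
    intro t _
    refine ⟨?_, ?_, ?_, ?_⟩
    · -- continuity in s
      refine ContinuousOn.add (ContinuousOn.add ?_ ?_) ?_
      · exact hφc.mul continuousOn_const
      · exact hφc.mul (th_continuous_s T 0 t).continuousOn
      · intro x hx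
        exact Filter.Tendsto.min (hφc x hx)
          ((uu_continuous_s T t).continuousWithinAt)
    · -- strict monotonicity in s
      intro a ha b hb hab
      have t1 : φ a * Real.exp (-t) < φ b * Real.exp (-t) :=
        mul_lt_mul_of_pos_right (hφm ha hb hab) (Real.exp_pos _)
      have t2 : φ a * th T 0 a t ≤ φ b * th T 0 b t :=
        mul_le_mul (hφm ha hb hab).le (th_mono_s T 0 t hab.le)
          (th_nonneg T 0 a t) (hφnn b hb)
      have t3 : min (φ a) (uu T a t) ≤ min (φ b) (uu T b t) :=
        min_le_min (hφm ha hb hab).le (uu_mono_s T t hab.le)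
      exact add_lt_add_of_lt_of_le (add_lt_add_of_lt_of_le t1 t2) t3
    · -- zero at zero
      simp only [hφ0, zero_mul, zero_add]
      exact min_eq_left (uu_nonneg T 0 t)
    · -- nonneg
      intro s hs
      show 0 ≤ φ s * Real.exp (-t) + φ s * th T 0 s t + min (φ s) (uu T s t)
      have e1 : 0 ≤ φ s * Real.exp (-t) := mul_nonneg (hφnn s hs) (Real.exp_pos _).le
      have e2 : 0 ≤ φ s * th T 0 s t := mul_nonneg (hφnn s hs) (th_nonneg T 0 s t)
      have e3 : 0 ≤ min (φ s) (uu T s t) := le_min (hφnn s hs) (uu_nonneg T s t)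
      linarith
  · -- KL part in t
    intro s hs
    refine ⟨?_, ?_, ?_⟩
    · -- continuity in t
      refine Continuous.continuousOn ?_
      refine Continuous.add (Continuous.add ?_ ?_) ?_
      · exact continuous_const.mul (Real.continuous_exp.comp continuous_neg)
      · exact continuous_const.mul (th_continuous_t T 0 s)
      · exact continuous_const.min (uu_continuous_t T s)
    · -- antitone in t
      intro t1 _ t2 _ h12
      have e1 : φ s * Real.exp (-t2) ≤ φ s * Real.exp (-t1) :=
        mul_le_mul_of_nonneg_left (Real.exp_le_exp.2 (neg_le_neg h12)) (hφnn s hs)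
      have e2 : φ s * th T 0 s t2 ≤ φ s * th T 0 s t1 :=
        mul_le_mul_of_nonneg_left (th_anti_t T 0 s h12) (hφnn s hs)
      have e3 : min (φ s) (uu T s t2) ≤ min (φ s) (uu T s t1) :=
        min_le_min le_rfl (uu_anti_t T s h12)
      exact add_le_add (add_le_add e1 e2) e3
    · -- tends to zero
      obtain ⟨N, hN⟩ := exists_N s
      have T1 : Tendsto (fun t : ℝ => φ s * Real.exp (-t)) atTop (nhds 0) := by
        have := Real.tendsto_exp_neg_atTop_nhds_zero.const_mul (φ s)
        simpa using this
      have T2 : Tendsto (fun t : ℝ => φ s * th T 0 s t) atTop (nhds 0) := by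
        refine Tendsto.congr' ?_ (tendsto_const_nhds (x := (0:ℝ)))
        filter_upwards [eventually_ge_atTop (T N 0 + 1)] with t ht
        rw [th_eq_zero T hT hN ht, mul_zero]
      have T3 : Tendsto (fun t : ℝ => min (φ s) (uu T s t)) atTop (nhds 0) := by
        refine squeeze_zero (fun t => le_min (hφnn s hs) (uu_nonneg T s t))
          (fun t => min_le_right _ _) ?_
        refine tendsto_order.2 ⟨fun a ha => ?_, fun a ha => ?_⟩
        · exact Eventually.of_forall fun t => lt_of_lt_of_le ha (uu_nonneg T s t)
        · obtain ⟨M, hM⟩ := exists_pow_lt_of_lt_one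
            (show (0:ℝ) < a / 6 by linarith) (by norm_num : (2⁻¹:ℝ) < 1)
          filter_upwards [eventually_ge_atTop (T N M + 1)] with t ht
          have := uu_le T hT hN ht
          have h6 : 6 * (2⁻¹:ℝ) ^ M < a := by
            have : (2⁻¹:ℝ) ^ M < a / 6 := hM
            linarith
          linarith
      have := (T1.add T2).add T3
      simpa using this
  · -- the two lower-bound properties
    intro s t hs
    have e1 : 0 ≤ φ s * Real.exp (-t) := mul_nonneg (hφnn s hs) (Real.exp_pos _).le
    have e2 : 0 ≤ φ s * th T 0 s t := mul_nonneg (hφnn s hs) (th_nonneg T 0 s t)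
    have e3 : 0 ≤ min (φ s) (uu T s t) := le_min (hφnn s hs) (uu_nonneg T s t)
    constructor
    · intro ht
      show φ s ≤ φ s * Real.exp (-t) + φ s * th T 0 s t + min (φ s) (uu T s t)
      rw [th_eq_one T (Nat.floor_le hs) ht]
      have := hφnn s hs
      nlinarith
    · intro m ht
      show min (φ s) (3 * (2⁻¹:ℝ) ^ m) ≤
        φ s * Real.exp (-t) + φ s * th T 0 s t + min (φ s) (uu T s t)
      have h2 := uu_ge T hT hs ht
      have h3 : min (φ s) (3 * (2⁻¹:ℝ) ^ m) ≤ min (φ s) (uu T s t) :=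
        min_le_min le_rfl h2
      linarith

end IOSAux

/-- Proposition 2.6 (ii): `(μ,C)`-practical-IOS implies `(μ,3C)`-𝒦𝓛-practical-IOS. -/
theorem practicalIOS_implies_klPracticalIOS {U : Type*} (𝒯 : AddSubgroup ℝ)
    (μ : U → ℝ → ℝ → ℝ) (hμ : InputMeasure μ) (C : ℝ) (hC : 0 ≤ C)
    (S : Set (EReal × U × (ℝ → ℝ) × (ℝ → ℝ)))
    (hS : ∀ τ u x y, (τ, u, x, y) ∈ S → IsTraj 𝒯 τ x y)
    (h : PracticalIOS 𝒯 μ C S) :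
    KLPracticalIOS 𝒯 μ (3 * C) S := by
  classical
  obtain ⟨⟨δ, ⟨⟨hδc, hδm, hδ0, hδnn⟩, hδtop⟩, hstab⟩, hatt⟩ := h
  -- Build a continuous strictly monotone global extension `D` of `δ` and its inverse `φ`.
  set D : ℝ → ℝ := fun s => if s ≤ 0 then s else δ s with hDdef
  have hδc' : Continuous fun s : ℝ => δ (max s 0) :=
    hδc.comp_continuous (continuous_id.max continuous_const)
      fun x => mem_Ici.2 (le_max_right _ _)
  have hDc : Continuous D := by
    have h1 : Continuous fun s : ℝ => if s ≤ 0 then s else δ (max s 0) :=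
      Continuous.if_le continuous_id hδc' continuous_id continuous_const
        (fun x hx => by rw [hx]; simp [hδ0])
    have h2 : (fun s : ℝ => if s ≤ 0 then s else δ (max s 0)) = D := by
      funext s
      by_cases hs : s ≤ 0
      · simp [hDdef, hs]
      · simp only [hDdef, hs, if_false]
        rw [max_eq_left (not_le.1 hs).le]
    rwa [h2] at h1
  have hDm : StrictMono D := by
    intro a b hab
    by_cases hb : b ≤ 0
    · have ha : a ≤ 0 := le_trans hab.le hb
      simpa [hDdef, ha, hb] using hab
    · have hbpos : 0 < b := not_le.1 hb
      have hδb : 0 < δ b := by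
        have := hδm (mem_Ici.2 le_rfl) (mem_Ici.2 hbpos.le) hbpos
        rwa [hδ0] at this
      by_cases ha : a ≤ 0
      · calc D a = a := by simp [hDdef, ha]
          _ ≤ 0 := ha
          _ < δ b := hδb
          _ = D b := by simp [hDdef, hb]
      · have hapos : 0 < a := not_le.1 ha
        have : δ a < δ b := hδm (mem_Ici.2 hapos.le) (mem_Ici.2 hbpos.le) hab
        simpa [hDdef, ha, hb] using this
  have hDsurj : Function.Surjective D := by
    refine hDc.surjective ?_ ?_
    · refine hδtop.congr' ?_
      filter_upwards [eventually_gt_atTop (0:ℝ)] with s hs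
      simp [hDdef, not_le.2 hs]
    · refine tendsto_id.congr' ?_
      filter_upwards [eventually_le_atBot (0:ℝ)] with s hs
      simp [hDdef, hs]
  set φ : ℝ → ℝ := fun s => (StrictMono.orderIsoOfSurjective D hDm hDsurj).symm s
    with hφdef
  have hφm : StrictMono φ := (StrictMono.orderIsoOfSurjective D hDm hDsurj).symm.strictMono
  have hφc : Continuous φ := (StrictMono.orderIsoOfSurjective D hDm hDsurj).symm.continuous
  have hD0 : D 0 = 0 := by simp [hDdef]
  have hφ0 : φ 0 = 0 := by
    have h1 := StrictMono.orderIsoOfSurjective_symm_apply_self D hDm hDsurj 0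
    rw [hD0] at h1
    exact h1
  have hφnn : ∀ s, 0 ≤ s → 0 ≤ φ s := fun s hs => by
    calc (0:ℝ) = φ 0 := hφ0.symm
      _ ≤ φ s := hφm.monotone hs
  have hDφ : ∀ s, D (φ s) = s := fun s =>
    StrictMono.orderIsoOfSurjective_self_symm_apply D hDm hDsurj s
  have hφpos : ∀ s, 0 < s → 0 < φ s := fun s hs => by
    calc (0:ℝ) = φ 0 := hφ0.symm
      _ < φ s := hφm hs
  have hδφ : ∀ s, 0 < s → δ (φ s) = s := by
    intro s hs
    have h1 := hDφ s
    rw [hDdef] at h1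
    simp only [not_le.2 (hφpos s hs), if_false] at h1
    exact h1
  -- Claim A : the stability-based bound
  have claimA : ∀ τ u x y, (τ, u, x, y) ∈ S →
      ∀ t0 t : ℝ, t0 ∈ 𝒯 → t ∈ 𝒯 → 0 ≤ t0 → t0 ≤ t → (t : EReal) < τ →
        y t ≤ max (φ (x t0)) (max (μ u t0 t) C) := by
    intro τ u x y hmem t0 t ht0T htT ht0 htt0 htτ
    have ht0τ : (t0 : EReal) < τ := lt_of_le_of_lt (EReal.coe_le_coe_iff.2 htt0) htτ
    have hx0 : 0 ≤ x t0 := ((hS τ u x y hmem).2 t0 ht0T ht0 ht0τ).1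
    rcases eq_or_lt_of_le hx0 with h0 | hpos
    · -- `x t0 = 0`
      have key : ∀ ε : ℝ, 0 < ε → y t ≤ max ε (max (μ u t0 t) C) := fun ε hε =>
        hstab ε hε τ u x y hmem t0 ht0T ht0 ht0τ
          (by rw [← h0]; exact hδnn ε hε.le) t htT htt0 htτ
      have hμnn : 0 ≤ μ u t0 t := hμ.1 u t0 t ht0 (le_trans ht0 htt0)
      have hM : 0 ≤ max (μ u t0 t) C := le_trans hμnn (le_max_left _ _)
      by_contra hcon
      push_neg at hcon
      have hlt : max (μ u t0 t) C < y t := lt_of_le_of_lt (le_max_right _ _) hcon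
      set M := max (μ u t0 t) C with hMdef
      have h2 := key ((M + y t) / 2) (by linarith)
      have h3 : max ((M + y t) / 2) M = (M + y t) / 2 := max_eq_left (by linarith)
      rw [h3] at h2
      linarith
    · -- `0 < x t0`
      have hφp := hφpos (x t0) hpos
      exact hstab (φ (x t0)) hφp τ u x y hmem t0 ht0T ht0 ht0τ
        (le_of_eq (hδφ (x t0) hpos).symm) t htT htt0 htτ
  -- Choose the attractivity times and monotonize them.
  choose T0 hT0pos hT0 using fun n m : ℕ =>
    hatt ((n : ℝ) + 1) (by positivity) (C + (2⁻¹:ℝ) ^ m)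
      (by
        have : (0:ℝ) < (2⁻¹:ℝ) ^ m := by positivity
        linarith)
  set Tm : ℕ → ℕ → ℝ := fun n m =>
    ((Finset.range (n+1)) ×ˢ (Finset.range (m+1))).sup'
      ⟨(0, 0), Finset.mem_product.2 ⟨Finset.mem_range.2 (Nat.succ_pos n),
        Finset.mem_range.2 (Nat.succ_pos m)⟩⟩ (fun p => T0 p.1 p.2) with hTmdef
  have hTm_mono : ∀ ⦃n n' : ℕ⦄, n ≤ n' → ∀ ⦃j j' : ℕ⦄, j ≤ j' → Tm n j ≤ Tm n' j' := by
    intro n n' hn j j' hj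
    have hsub : (Finset.range (n+1)) ×ˢ (Finset.range (j+1)) ⊆
        (Finset.range (n'+1)) ×ˢ (Finset.range (j'+1)) :=
      Finset.product_subset_product
        (Finset.range_subset_range.2 (by omega)) (Finset.range_subset_range.2 (by omega))
    exact Finset.sup'_mono (fun p => T0 p.1 p.2) hsub _
  have hT0_le : ∀ n m : ℕ, T0 n m ≤ Tm n m := by
    intro n m
    have hmem2 : ((n, m) : ℕ × ℕ) ∈ (Finset.range (n+1)) ×ˢ (Finset.range (m+1)) :=
      Finset.mem_product.2 ⟨Finset.mem_range.2 (Nat.lt_succ_self n),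
        Finset.mem_range.2 (Nat.lt_succ_self m)⟩
    exact Finset.le_sup' (fun p => T0 p.1 p.2) hmem2
  -- Get the KL function
  obtain ⟨β, hβKL, hβprop⟩ := IOSAux.exists_beta φ hφc.continuousOn
    (hφm.strictMonoOn _) hφ0 hφnn Tm hTm_mono
  refine ⟨β, hβKL, ?_⟩
  intro τ u x y hmem t0 t ht0T htT ht0 htt0 htτ
  have ht0τ : (t0 : EReal) < τ := lt_of_le_of_lt (EReal.coe_le_coe_iff.2 htt0) htτ
  have hx0 : 0 ≤ x t0 := ((hS τ u x y hmem).2 t0 ht0T ht0 ht0τ).1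
  set s := x t0 with hsdef
  set n := ⌊s⌋₊ with hndef
  set d := t - t0 with hddef
  have hA := claimA τ u x y hmem t0 t ht0T htT ht0 htt0 htτ
  have hxr : s ≤ (n : ℝ) + 1 := (Nat.lt_floor_add_one s).le
  have hatt' : ∀ m : ℕ, T0 n m ≤ d →
      y t ≤ max (C + (2⁻¹:ℝ) ^ m) (μ u t0 t) := by
    intro m hm
    exact hT0 n m τ u x y hmem t0 ht0T ht0 ht0τ hxr t htT (by linarith) htτ
  have hμnn : 0 ≤ μ u t0 t := hμ.1 u t0 t ht0 (le_trans ht0 htt0)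
  have hC3 : C ≤ 3 * C := by linarith
  obtain ⟨hβ1, hβ2⟩ := hβprop s d hx0
  by_cases hP : ∃ m : ℕ, d < Tm n m
  · obtain ⟨m0, hfind⟩ : ∃ m0, Nat.find hP = m0 := ⟨_, rfl⟩
    have hm0 : d < Tm n m0 := hfind ▸ Nat.find_spec hP
    cases m0 with
    | zero =>
      -- initial segment: the `φ` bound is enough
      have hβφ : φ s ≤ β s d := hβ1 hm0.le
      calc y t ≤ max (φ s) (max (μ u t0 t) C) := hA
        _ ≤ max (β s d) (max (μ u t0 t) (3 * C)) := by
            apply max_le_max hβφ (max_le_max le_rfl hC3)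
    | succ m =>
      have hmle : Tm n m ≤ d := by
        have := Nat.find_min hP (show m < Nat.find hP by omega)
        exact not_lt.1 this
      have hy1 : y t ≤ max (C + (2⁻¹:ℝ) ^ m) (μ u t0 t) :=
        hatt' m (le_trans (hT0_le n m) hmle)
      have hy2 : min (φ s) (3 * (2⁻¹:ℝ) ^ m) ≤ β s d := hβ2 m hm0.le
      rcases le_or_gt (y t) (μ u t0 t) with hyμ | hyμ
      · exact le_trans hyμ (le_trans (le_max_left _ _) (le_max_right _ _))
      · have hyε : y t ≤ C + (2⁻¹:ℝ) ^ m :=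
          (le_max_iff.1 hy1).resolve_right (by linarith)
        rcases le_or_gt ((2⁻¹:ℝ) ^ m) C with hcm | hcm
        · have h3 : y t ≤ 3 * C := by linarith
          exact le_trans h3 (le_trans (le_max_right _ _) (le_max_right _ _))
        · have hy3 : y t ≤ 3 * (2⁻¹:ℝ) ^ m := by linarith
          rcases le_max_iff.1 hA with hyφ | hyMC
          · have h4 : y t ≤ min (φ s) (3 * (2⁻¹:ℝ) ^ m) := le_min hyφ hy3
            exact le_trans h4 (le_trans hy2 (le_max_left _ _))
          · rcases le_max_iff.1 hyMC with h5 | h5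
            · linarith
            · have h6 : y t ≤ 3 * C := by linarith
              exact le_trans h6 (le_trans (le_max_right _ _) (le_max_right _ _))
  · -- all deadlines passed : `y ≤ max C μ`
    push_neg at hP
    have hall : ∀ m : ℕ, y t ≤ max (C + (2⁻¹:ℝ) ^ m) (μ u t0 t) := fun m =>
      hatt' m (le_trans (hT0_le n m) (hP m))
    rcases le_or_gt (y t) (μ u t0 t) with hyμ | hyμ
    · exact le_trans hyμ (le_trans (le_max_left _ _) (le_max_right _ _))
    · have hyC : ∀ m : ℕ, y t ≤ C + (2⁻¹:ℝ) ^ m := fun m =>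
        (le_max_iff.1 (hall m)).resolve_right (by linarith)
      have hyC' : y t ≤ C := by
        by_contra hcon
        push_neg at hcon
        obtain ⟨m, hm⟩ := exists_pow_lt_of_lt_one (show (0:ℝ) < y t - C by linarith)
          (by norm_num : (2⁻¹:ℝ) < 1)
        have := hyC m
        linarith
      have : y t ≤ 3 * C := by linarith
      exact le_trans this (le_trans (le_max_right _ _) (le_max_right _ _))
end IOSAux
end
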